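/- arXiv:1501.07812 — 5 statements merged into one kernel-verified Lean document; each statement's English description precedes it below -/
import Mathlib

section
/- Let Q ∈ ℂ^{n×n} be a unitary matrix that is upper Hessenberg. Then Q is (1,1)-quasiseparable: rank(Q[i+1:n, 1:i]) ≤ 1 and rank(Q[1:i, i+1:n]) ≤ 1 for every i = 1,…,n−1. -/
open Matrix BigOperators

/-- `A` is lower-quasiseparable of rank `k`:
`rank (A[i+1:n, 1:i]) ≤ k` for every `i = 1, …, n-1` (MATLAB notation). -/
noncomputable def lowQS {n : ℕ} (k : ℕ) (A : Matrix (Fin n) (Fin n) ℂ) : Prop :=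
  ∀ i : ℕ, ∀ _hi : 0 < i, ∀ _hin : i < n,
    (Matrix.of fun (p : Fin (n - i)) (q : Fin i) =>
      A ⟨i + p.1, by have := p.2; omega⟩ ⟨q.1, by have := q.2; omega⟩).rank ≤ k

/-- `A` is upper-quasiseparable of rank `k`:
`rank (A[1:i, i+1:n]) ≤ k` for every `i = 1, …, n-1` (MATLAB notation). -/
noncomputable def upQS {n : ℕ} (k : ℕ) (A : Matrix (Fin n) (Fin n) ℂ) : Prop :=
  ∀ i : ℕ, ∀ _hi : 0 < i, ∀ _hin : i < n,
    (Matrix.of fun (p : Fin i) (q : Fin (n - i)) =>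
      A ⟨p.1, by have := p.2; omega⟩ ⟨i + q.1, by have := q.2; omega⟩).rank ≤ k

/-!
Below the diagonal, the block `Q[i+1:n, 1:i]` of an upper Hessenberg matrix has a single nonzero
row, so it has rank at most one. Above the diagonal, write `Q = [A B; C D]` with `B = Q[1:i, i+1:n]`
and `C = Q[i+1:n, 1:i]`. From `Q Qᴴ = 1` we get `A Cᴴ + B Dᴴ = 0` and `C Cᴴ + D Dᴴ = 1`, so `Dᴴ`
maps `ker Cᴴ` injectively into `ker B`; hence `rank B ≤ rank Cᴴ = rank C ≤ 1`.
-/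

namespace Matrix

section

variable {K k l m : Type*} [Field K] [Fintype l] [DecidableEq l] [Fintype m]

/-- A form of the nullity theorem: `Y` maps `ker X` injectively into `ker B`. -/
theorem rank_le_rank_of_mul_add_mul_eq_one {A : Matrix k m K} {B : Matrix k l K}
    {C : Matrix l m K} {D : Matrix l l K} {X : Matrix m l K} {Y : Matrix l l K}
    (h₁ : C * X + D * Y = 1) (h₂ : A * X + B * Y = 0) : B.rank ≤ X.rank := by
  have hmaps : ∀ x ∈ LinearMap.ker X.mulVecLin, Y.mulVecLin x ∈ LinearMap.ker B.mulVecLin := by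
    intro x hx
    simp only [LinearMap.mem_ker, mulVecLin_apply] at hx ⊢
    rw [mulVec_mulVec, eq_neg_of_add_eq_zero_right h₂, neg_mulVec, ← mulVec_mulVec, hx,
      mulVec_zero, neg_zero]
  have hD : ∀ z ∈ LinearMap.ker X.mulVecLin, D *ᵥ (Y *ᵥ z) = z := by
    intro z hz
    rw [LinearMap.mem_ker, mulVecLin_apply] at hz
    rw [mulVec_mulVec, eq_sub_of_add_eq' h₁, sub_mulVec, one_mulVec, ← mulVec_mulVec, hz,
      mulVec_zero, sub_zero]
  have hinj : Function.Injective (Y.mulVecLin.restrict hmaps) := by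
    intro x y hxy
    have := congrArg (fun z : LinearMap.ker B.mulVecLin => D *ᵥ (z : l → K)) hxy
    simp only [LinearMap.restrict_apply, mulVecLin_apply] at this
    exact Subtype.ext (by rw [← hD x x.2, ← hD y y.2, this])
  have hker := LinearMap.finrank_le_finrank_of_injective hinj
  have hB := LinearMap.finrank_range_add_finrank_ker B.mulVecLin
  have hX := LinearMap.finrank_range_add_finrank_ker X.mulVecLin
  rw [rank, rank]
  omega

end

theorem rank_toBlocks₁₂_le_of_mul_conjTranspose_eq_one {R m l : Type*} [Field R] [PartialOrder R]
    [StarRing R] [StarOrderedRing R] [Fintype m] [Fintype l] [DecidableEq m] [DecidableEq l]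
    {M : Matrix (m ⊕ l) (m ⊕ l) R} (hM : M * Mᴴ = 1) :
    M.toBlocks₁₂.rank ≤ M.toBlocks₂₁.rank := by
  rw [← fromBlocks_toBlocks M, fromBlocks_conjTranspose, fromBlocks_multiply, ← fromBlocks_one,
    fromBlocks_inj] at hM
  obtain ⟨-, h₂, -, h₁⟩ := hM
  exact (rank_le_rank_of_mul_add_mul_eq_one h₁ h₂).trans (rank_conjTranspose _).le

end Matrix

theorem upQS_of_lowQS_of_mem_unitaryGroup {n k : ℕ} {Q : Matrix (Fin n) (Fin n) ℂ}
    (hQ : Q ∈ Matrix.unitaryGroup (Fin n) ℂ) (h : lowQS k Q) : upQS k Q := by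
  intro i hi hin
  let e : Fin i ⊕ Fin (n - i) ≃ Fin n := finSumFinEquiv.trans (finCongr (by omega))
  have hM : Q.submatrix e e * (Q.submatrix e e)ᴴ = 1 := by
    rw [conjTranspose_submatrix, submatrix_mul_equiv, ← star_eq_conjTranspose,
      mem_unitaryGroup_iff.mp hQ, submatrix_one_equiv]
  open scoped ComplexOrder in
  exact (rank_toBlocks₁₂_le_of_mul_conjTranspose_eq_one hM).trans (h i hi hin)

theorem lowQS_one_of_hessenberg {n : ℕ} {Q : Matrix (Fin n) (Fin n) ℂ}
    (hHess : ∀ i j : Fin n, (j : ℕ) + 1 < (i : ℕ) → Q i j = 0) : lowQS 1 Q := by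
  intro i hi hin
  refine (rank_le_card_of_support_subset _ {⟨0, by omega⟩} fun p hp => ?_).trans_eq
    (Finset.card_singleton _)
  by_contra hp0
  have hp0 : (p : ℕ) ≠ 0 := fun h => hp0 (Finset.mem_singleton.2 (Fin.ext h))
  refine hp (funext fun q => hHess _ _ ?_)
  have := q.2
  simp only
  omega

/-- A unitary upper Hessenberg matrix is `(1,1)`-quasiseparable. -/
theorem stmt_5 (n : ℕ) (Q : Matrix (Fin n) (Fin n) ℂ)
    (hQ : Q ∈ Matrix.unitaryGroup (Fin n) ℂ)
    (hHess : ∀ i j : Fin n, (j : ℕ) + 1 < (i : ℕ) → Q i j = 0) :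
    lowQS 1 Q ∧ upQS 1 Q :=
  have hlow := lowQS_one_of_hessenberg hHess
  ⟨hlow, upQS_of_lowQS_of_mem_unitaryGroup hQ hlow⟩
end

section
/- Let n > k ≥ 1, let Z ∈ ℂ^{k×k} be arbitrary, let D ∈ ℂ^{(n−k)×(n−k)} be diagonal, and set S = Z ⊕ D (the block diagonal matrix with blocks Z and D). Then for every A ∈ ℂ^{n×n} there exists W ∈ ℂ^{k×k} such that t(SAS^*) − S t(A) S^* = W ⊕ 0_{n−k}, where 0_{n−k} is the (n−k)×(n−k) zero matrix. In particular this holds when D is the identity I_{n−k}. -/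
/-!
Split `t(A) = L(A) + L(A)ᴴ`, where `L` takes the strictly lower triangular part. Since the
residual for `t` is then `R + Rᴴ` with `R = L(SASᴴ) - S L(A) Sᴴ`, it suffices to see that `R`
vanishes off the leading `k × k` block. In a trailing row or column, `S` and `Sᴴ` act by the
scalars `d p`, `conj (d q)`, which commute with `L`. Where a leading index meets a trailing one,
`L` is decided by the order alone (leading indices precede trailing ones), so there `L` also
commutes with multiplication by the arbitrary block `Z`.
-/

open Matrix BigOperators

/-- The operator `t`: `t(A)_{ij} = A_{ij}` for `i > j`, `conj (A_{ji})` for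
`i < j`, and `0` on the diagonal. -/
noncomputable def tOp {n : ℕ} (A : Matrix (Fin n) (Fin n) ℂ) :
    Matrix (Fin n) (Fin n) ℂ :=
  Matrix.of fun i j =>
    if j < i then A i j else if i < j then (starRingEnd ℂ) (A j i) else 0

namespace Matrix

def strictLower {ι α : Type*} [LT ι] [DecidableRel (α := ι) (· < ·)] [Zero α]
    (A : Matrix ι ι α) : Matrix ι ι α :=
  of fun i j => if j < i then A i j else 0

theorem strictLower_apply {ι α : Type*} [LT ι] [DecidableRel (α := ι) (· < ·)] [Zero α]
    (A : Matrix ι ι α) (i j : ι) : strictLower A i j = if j < i then A i j else 0 :=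
  rfl

theorem tOp_eq_strictLower_add_conjTranspose {n : ℕ} (A : Matrix (Fin n) (Fin n) ℂ) :
    tOp A = strictLower A + (strictLower A)ᴴ := by
  ext i j
  rcases lt_trichotomy i j with h | rfl | h
  · simp [tOp, strictLower_apply, h, h.not_gt]
  · simp [tOp, strictLower_apply]
  · simp [tOp, strictLower_apply, h, h.not_gt]

def VanishesOffLeadingBlock {n : ℕ} {α : Type*} [Zero α] (k : ℕ)
    (M : Matrix (Fin n) (Fin n) α) : Prop :=
  ∀ p q : Fin n, k ≤ (p : ℕ) ∨ k ≤ (q : ℕ) → M p q = 0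

namespace VanishesOffLeadingBlock

variable {n k : ℕ}

theorem add {α : Type*} [AddZeroClass α] {M N : Matrix (Fin n) (Fin n) α}
    (hM : VanishesOffLeadingBlock k M) (hN : VanishesOffLeadingBlock k N) :
    VanishesOffLeadingBlock k (M + N) := fun p q h => by
  rw [add_apply, hM p q h, hN p q h, add_zero]

theorem conjTranspose {α : Type*} [AddMonoid α] [StarAddMonoid α]
    {M : Matrix (Fin n) (Fin n) α} (hM : VanishesOffLeadingBlock k M) :
    VanishesOffLeadingBlock k Mᴴ := fun p q h => by
  rw [conjTranspose_apply, hM q p h.symm, star_zero]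

theorem exists_eq_dite {α : Type*} [Zero α] {M : Matrix (Fin n) (Fin n) α}
    (hM : VanishesOffLeadingBlock k M) :
    ∃ W : Matrix (Fin k) (Fin k) α, ∀ p q : Fin n,
      M p q = if hp : (p : ℕ) < k then
        (if hq : (q : ℕ) < k then W ⟨p, hp⟩ ⟨q, hq⟩ else 0) else 0 := by
  refine ⟨fun a b =>
    if h : (a : ℕ) < n ∧ (b : ℕ) < n then M ⟨a, h.1⟩ ⟨b, h.2⟩ else 0,
    fun p q => ?_⟩
  by_cases hp : (p : ℕ) < k
  · by_cases hq : (q : ℕ) < k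
    · simp [hp, hq]
    · simp [hp, hq, hM p q (.inr (not_lt.mp hq))]
  · simp [hp, hM p q (.inl (not_lt.mp hp))]

end VanishesOffLeadingBlock

/-- `Z ⊕ diag (d k, …, d (n - 1))`; the first `k` values of `d` are ignored. -/
def leadingBlockDiagonal {n k : ℕ} (Z : Matrix (Fin k) (Fin k) ℂ) (d : Fin n → ℂ) :
    Matrix (Fin n) (Fin n) ℂ :=
  of fun p q =>
    if hp : (p : ℕ) < k then (if hq : (q : ℕ) < k then Z ⟨p, hp⟩ ⟨q, hq⟩ else 0)
    else if p = q then d p else 0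

section LeadingBlockDiagonal

variable {n k : ℕ} (Z : Matrix (Fin k) (Fin k) ℂ) (d : Fin n → ℂ)

local notation "S" => leadingBlockDiagonal Z d

theorem leadingBlockDiagonal_apply_of_lt_of_le {p i : Fin n} (hp : (p : ℕ) < k)
    (hi : k ≤ (i : ℕ)) : S p i = 0 := by
  simp [leadingBlockDiagonal, hp, hi.not_gt]

theorem leadingBlockDiagonal_mul_apply_of_le (M : Matrix (Fin n) (Fin n) ℂ) {p : Fin n}
    (hp : k ≤ (p : ℕ)) (j : Fin n) : (S * M) p j = d p * M p j := by
  simp [mul_apply, leadingBlockDiagonal, hp.not_gt, ite_mul]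

theorem mul_conjTranspose_leadingBlockDiagonal_apply_of_le (M : Matrix (Fin n) (Fin n) ℂ)
    (p : Fin n) {q : Fin n} (hq : k ≤ (q : ℕ)) :
    (M * Sᴴ) p q = M p q * starRingEnd ℂ (d q) := by
  simp [mul_apply, leadingBlockDiagonal, hq.not_gt, apply_ite star, eq_comm (a := q)]

theorem strictLower_apply_leadingBlockDiagonal_mul_of_le (M : Matrix (Fin n) (Fin n) ℂ)
    {p : Fin n} (hp : k ≤ (p : ℕ)) (q : Fin n) :
    strictLower (S * M) p q = d p * strictLower M p q := by
  simp only [strictLower_apply, leadingBlockDiagonal_mul_apply_of_le Z d _ hp, mul_ite, mul_zero]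

theorem strictLower_apply_mul_conjTranspose_leadingBlockDiagonal_of_le
    (M : Matrix (Fin n) (Fin n) ℂ) (p : Fin n) {q : Fin n} (hq : k ≤ (q : ℕ)) :
    strictLower (M * Sᴴ) p q = strictLower M p q * starRingEnd ℂ (d q) := by
  simp only [strictLower_apply, mul_conjTranspose_leadingBlockDiagonal_apply_of_le Z d _ _ hq,
    ite_mul, zero_mul]

theorem leadingBlockDiagonal_mul_strictLower_apply_of_le (A : Matrix (Fin n) (Fin n) ℂ)
    (p : Fin n) {q : Fin n} (hq : k ≤ (q : ℕ)) :
    (S * strictLower A) p q = strictLower (S * A) p q := by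
  by_cases hp : k ≤ (p : ℕ)
  · rw [strictLower_apply_leadingBlockDiagonal_mul_of_le Z d _ hp,
      leadingBlockDiagonal_mul_apply_of_le Z d _ hp]
  -- a leading row of `S` only meets leading rows of `L(A)`, which vanish in the trailing column `q`
  rw [not_le] at hp
  have hpq : ¬ q < p := by rw [Fin.lt_def]; omega
  rw [strictLower_apply, if_neg hpq, mul_apply]
  refine Finset.sum_eq_zero fun i _ => ?_
  by_cases hi : k ≤ (i : ℕ)
  · rw [leadingBlockDiagonal_apply_of_lt_of_le Z d hp hi, zero_mul]
  · have hqi : ¬ q < i := by rw [Fin.lt_def]; omega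
    rw [strictLower_apply, if_neg hqi, mul_zero]

theorem strictLower_mul_conjTranspose_leadingBlockDiagonal_apply_of_le
    (A : Matrix (Fin n) (Fin n) ℂ) {p : Fin n} (hp : k ≤ (p : ℕ)) (q : Fin n) :
    (strictLower A * Sᴴ) p q = strictLower (A * Sᴴ) p q := by
  by_cases hq : k ≤ (q : ℕ)
  · rw [strictLower_apply_mul_conjTranspose_leadingBlockDiagonal_of_le Z d _ _ hq,
      mul_conjTranspose_leadingBlockDiagonal_apply_of_le Z d _ _ hq]
  -- a leading column of `Sᴴ` only meets leading columns, which lie strictly below row `p`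
  rw [not_le] at hq
  have hqp : q < p := by rw [Fin.lt_def]; omega
  rw [strictLower_apply, if_pos hqp, mul_apply, mul_apply]
  refine Finset.sum_congr rfl fun j _ => ?_
  by_cases hj : k ≤ (j : ℕ)
  · rw [conjTranspose_apply, leadingBlockDiagonal_apply_of_lt_of_le Z d hq hj, star_zero,
      mul_zero, mul_zero]
  · have hjp : j < p := by rw [Fin.lt_def]; omega
    rw [strictLower_apply, if_pos hjp]

theorem vanishesOffLeadingBlock_strictLower_sub (A : Matrix (Fin n) (Fin n) ℂ) :
    VanishesOffLeadingBlock k (strictLower (S * A * Sᴴ) - S * strictLower A * Sᴴ) := by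
  rintro p q (hp | hq)
  · rw [sub_apply, sub_eq_zero, Matrix.mul_assoc, Matrix.mul_assoc,
      strictLower_apply_leadingBlockDiagonal_mul_of_le Z d _ hp,
      leadingBlockDiagonal_mul_apply_of_le Z d _ hp,
      strictLower_mul_conjTranspose_leadingBlockDiagonal_apply_of_le Z d _ hp]
  · rw [sub_apply, sub_eq_zero,
      strictLower_apply_mul_conjTranspose_leadingBlockDiagonal_of_le Z d _ _ hq,
      mul_conjTranspose_leadingBlockDiagonal_apply_of_le Z d _ _ hq,
      leadingBlockDiagonal_mul_strictLower_apply_of_le Z d _ _ hq]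

end LeadingBlockDiagonal

theorem tOp_mul_sub_mul_tOp {n : ℕ} (S A : Matrix (Fin n) (Fin n) ℂ) :
    tOp (S * A * Sᴴ) - S * tOp A * Sᴴ =
      (strictLower (S * A * Sᴴ) - S * strictLower A * Sᴴ) +
        (strictLower (S * A * Sᴴ) - S * strictLower A * Sᴴ)ᴴ := by
  simp only [tOp_eq_strictLower_add_conjTranspose, conjTranspose_sub, conjTranspose_mul,
    conjTranspose_conjTranspose, Matrix.mul_add, Matrix.add_mul, Matrix.mul_assoc]
  abel

end Matrix

theorem stmt_7_general (n k : ℕ)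
    (Z : Matrix (Fin k) (Fin k) ℂ) (d : Fin n → ℂ)
    (A : Matrix (Fin n) (Fin n) ℂ) :
    let S : Matrix (Fin n) (Fin n) ℂ := Matrix.of fun p q =>
      if hp : (p : ℕ) < k then
        (if hq : (q : ℕ) < k then Z ⟨p, hp⟩ ⟨q, hq⟩ else 0)
      else if p = q then d p else 0
    ∃ W : Matrix (Fin k) (Fin k) ℂ,
      ∀ p q : Fin n,
        (tOp (S * A * Sᴴ) - S * tOp A * Sᴴ) p q =
          if hp : (p : ℕ) < k then
            (if hq : (q : ℕ) < k then W ⟨p, hp⟩ ⟨q, hq⟩ else 0)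
          else 0 := by
  intro S
  have hR : VanishesOffLeadingBlock k (strictLower (S * A * Sᴴ) - S * strictLower A * Sᴴ) :=
    vanishesOffLeadingBlock_strictLower_sub Z d A
  have hres : VanishesOffLeadingBlock k (tOp (S * A * Sᴴ) - S * tOp A * Sᴴ) := by
    rw [tOp_mul_sub_mul_tOp]
    exact hR.add hR.conjTranspose
  exact hres.exists_eq_dite

/-- For `S = Z ⊕ D` with `Z ∈ ℂ^{k×k}` arbitrary and `D` diagonal of size
`n-k`, the residual `t(SASᴴ) - S t(A) Sᴴ` is of the form `W ⊕ 0_{n-k}`. -/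
theorem stmt_7 (n k : ℕ) (hk : 1 ≤ k) (hkn : k < n)
    (Z : Matrix (Fin k) (Fin k) ℂ) (d : Fin n → ℂ)
    (A : Matrix (Fin n) (Fin n) ℂ) :
    let S : Matrix (Fin n) (Fin n) ℂ := Matrix.of fun p q =>
      if hp : (p : ℕ) < k then
        (if hq : (q : ℕ) < k then Z ⟨p, hp⟩ ⟨q, hq⟩ else 0)
      else if p = q then d p else 0
    ∃ W : Matrix (Fin k) (Fin k) ℂ,
      ∀ p q : Fin n,
        (tOp (S * A * Sᴴ) - S * tOp A * Sᴴ) p q =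
          if hp : (p : ℕ) < k then
            (if hq : (q : ℕ) < k then W ⟨p, hp⟩ ⟨q, hq⟩ else 0)
          else 0 :=
  stmt_7_general n k Z d A
end

section
/- Let n > k ≥ 1, let Z ∈ ℂ^{k×k} be arbitrary, let D ∈ ℂ^{(n−k)×(n−k)} be diagonal, and set S = D ⊕ Z (the block diagonal matrix with blocks D and Z). Then for every A ∈ ℂ^{n×n} there exists W' ∈ ℂ^{k×k} such that t(SAS^*) − S t(A) S^* = 0_{n−k} ⊕ W', where 0_{n−k} is the (n−k)×(n−k) zero matrix. In particular this holds when D is the identity I_{n−k}. -/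
open Matrix BigOperators

/-!
Write `S = D ⊕ Z` and `m = n - k`. For `p < m` the `p`-th row of `S` is `d p • eₚ`, so in row `p`
both `S (t A) Sᴴ` and `t (S A Sᴴ)` are `d p` times the `p`-th row of `t A` (resp. of `A` or `Aᴴ`)
multiplied by `Sᴴ`. Row `q` of `S` only involves indices on the same side of `p` as `q` itself,
so the entries of `A`, `Aᴴ` and `t A` that meet it agree. This kills every row `p < m` of the
defect `t (S A Sᴴ) - S (t A) Sᴴ`; the defect is Hermitian, so the columns `q < m` vanish too.
-/

namespace Matrix

variable {ι κ R : Type*}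

lemma mul_apply_of_offDiag_row_eq_zero [Fintype ι] [NonUnitalNonAssocSemiring R] {S : Matrix ι ι R}
    {p : ι} (hp : ∀ j, j ≠ p → S p j = 0) (N : Matrix ι κ R) (q : κ) :
    (S * N) p q = S p p * N p q :=
  (mul_apply).trans <|
    Finset.sum_eq_single p (fun j _ hj => by rw [hp j hj, zero_mul]) (by simp)

lemma mul_conjTranspose_apply_congr [Fintype κ] [NonUnitalSemiring R] [StarRing R]
    {M N : Matrix ι κ R} {S : Matrix ι κ R} {p q : ι}
    (h : ∀ l, S q l ≠ 0 → M p l = N p l) :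
    (M * Sᴴ) p q = (N * Sᴴ) p q := by
  simp only [mul_apply, conjTranspose_apply]
  refine Finset.sum_congr rfl fun l _ => ?_
  by_cases hl : S q l = 0
  · simp [hl]
  · rw [h l hl]

end Matrix

section tOp

variable {n : ℕ}

lemma tOp_apply_of_lt (A : Matrix (Fin n) (Fin n) ℂ) {i j : Fin n} (h : j < i) :
    tOp A i j = A i j := by
  simp [tOp, h]

lemma tOp_apply_of_gt (A : Matrix (Fin n) (Fin n) ℂ) {i j : Fin n} (h : i < j) :
    tOp A i j = Aᴴ i j := by
  simp [tOp, h, not_lt.2 h.le]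

lemma tOp_apply_self (A : Matrix (Fin n) (Fin n) ℂ) (i : Fin n) : tOp A i i = 0 := by
  simp [tOp]

lemma tOp_isHermitian (A : Matrix (Fin n) (Fin n) ℂ) : (tOp A).IsHermitian := by
  ext i j
  rw [conjTranspose_apply]
  rcases lt_trichotomy i j with h | rfl | h
  · rw [tOp_apply_of_lt _ h, tOp_apply_of_gt _ h, conjTranspose_apply]
  · simp [tOp_apply_self]
  · rw [tOp_apply_of_lt _ h, tOp_apply_of_gt _ h, conjTranspose_apply, star_star]

theorem tOp_mul_mul_conjTranspose_apply {S A : Matrix (Fin n) (Fin n) ℂ} {p q : Fin n}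
    (hp : ∀ j, j ≠ p → S p j = 0) (hq : ∀ j, S q j ≠ 0 → compare j p = compare q p) :
    tOp (S * A * Sᴴ) p q = (S * tOp A * Sᴴ) p q := by
  have row_p (N : Matrix (Fin n) (Fin n) ℂ) : (S * N * Sᴴ) p q = S p p * (N * Sᴴ) p q := by
    rw [mul_assoc, mul_apply_of_offDiag_row_eq_zero hp]
  rw [row_p]
  rcases lt_trichotomy q p with h | rfl | h
  · have hl : ∀ l, S q l ≠ 0 → l < p := fun l hl =>
      compare_lt_iff_lt.1 ((hq l hl).trans (compare_lt_iff_lt.2 h))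
    rw [tOp_apply_of_lt _ h, row_p,
      mul_conjTranspose_apply_congr fun l hl' => (tOp_apply_of_lt A (hl l hl')).symm]
  · have hl : ∀ l, S q l ≠ 0 → l = q := fun l hl =>
      compare_eq_iff_eq.1 ((hq l hl).trans Std.compare_self)
    rw [tOp_apply_self, mul_conjTranspose_apply_congr (N := 0) fun l hl' => by
      rw [hl l hl', tOp_apply_self, Matrix.zero_apply]]
    simp
  · have hl : ∀ l, S q l ≠ 0 → p < l := fun l hl =>
      compare_gt_iff_gt.1 ((hq l hl).trans (compare_gt_iff_gt.2 h))
    have hadj : (S * A * Sᴴ)ᴴ = S * Aᴴ * Sᴴ := by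
      simp only [conjTranspose_mul, conjTranspose_conjTranspose, mul_assoc]
    rw [tOp_apply_of_gt _ h, hadj, row_p,
      mul_conjTranspose_apply_congr fun l hl' => (tOp_apply_of_gt A (hl l hl')).symm]

noncomputable def tOpDefect (S A : Matrix (Fin n) (Fin n) ℂ) : Matrix (Fin n) (Fin n) ℂ :=
  tOp (S * A * Sᴴ) - S * tOp A * Sᴴ

lemma tOpDefect_isHermitian (S A : Matrix (Fin n) (Fin n) ℂ) : (tOpDefect S A).IsHermitian :=
  (tOp_isHermitian _).sub (isHermitian_mul_mul_conjTranspose S (tOp_isHermitian A))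

theorem tOpDefect_apply_eq_zero {S : Matrix (Fin n) (Fin n) ℂ} {m : ℕ}
    (hdiag : ∀ p j : Fin n, (p : ℕ) < m → j ≠ p → S p j = 0)
    (hblock : ∀ p j : Fin n, m ≤ p → (j : ℕ) < m → S p j = 0)
    (A : Matrix (Fin n) (Fin n) ℂ) {p q : Fin n} (hpq : (p : ℕ) < m ∨ (q : ℕ) < m) :
    tOpDefect S A p q = 0 := by
  have row_eq_zero {p q : Fin n} (hp : (p : ℕ) < m) : tOpDefect S A p q = 0 := by
    rw [tOpDefect, Matrix.sub_apply, sub_eq_zero]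
    refine tOp_mul_mul_conjTranspose_apply (hdiag p · hp) fun j hj => ?_
    by_cases hq : (q : ℕ) < m
    · obtain rfl : j = q := by_contra fun h => hj (hdiag q j hq h)
      rfl
    · have hj' : m ≤ (j : ℕ) := by_contra fun h => hj (hblock q j (by omega) (by omega))
      rw [compare_gt_iff_gt.2 (show p < j by omega), compare_gt_iff_gt.2 (show p < q by omega)]
  rcases hpq with hp | hq
  · exact row_eq_zero hp
  · rw [← (tOpDefect_isHermitian S A).apply, row_eq_zero hq, star_zero]

end tOp

/-- For `S = D ⊕ Z` with `D` diagonal of size `n-k` and `Z ∈ ℂ^{k×k}`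
arbitrary, the residual `t(SASᴴ) - S t(A) Sᴴ` is of the form `0_{n-k} ⊕ W'`. -/
theorem stmt_8 (n k : ℕ) (hkn : k < n)
    (Z : Matrix (Fin k) (Fin k) ℂ) (d : Fin n → ℂ)
    (A : Matrix (Fin n) (Fin n) ℂ) :
    let S : Matrix (Fin n) (Fin n) ℂ := Matrix.of fun p q =>
      if hp : (p : ℕ) < n - k then (if p = q then d p else 0)
      else if hq : (q : ℕ) < n - k then 0
      else Z ⟨(p : ℕ) - (n - k), by have := p.2; omega⟩
             ⟨(q : ℕ) - (n - k), by have := q.2; omega⟩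
    ∃ W' : Matrix (Fin k) (Fin k) ℂ,
      ∀ p q : Fin n,
        (tOp (S * A * Sᴴ) - S * tOp A * Sᴴ) p q =
          if hp : (p : ℕ) < n - k then 0
          else if hq : (q : ℕ) < n - k then 0
          else W' ⟨(p : ℕ) - (n - k), by have := p.2; omega⟩
                  ⟨(q : ℕ) - (n - k), by have := q.2; omega⟩ := by
  intro S
  have hdiag : ∀ p j : Fin n, (p : ℕ) < n - k → j ≠ p → S p j = 0 := fun p j hp hj => by
    simp [S, hp, Ne.symm hj]
  have hblock : ∀ p j : Fin n, n - k ≤ p → (j : ℕ) < n - k → S p j = 0 := fun p j hp hj => by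
    simp [S, hj, not_lt.2 hp]
  refine ⟨fun a b => tOpDefect S A ⟨a + (n - k), by omega⟩ ⟨b + (n - k), by omega⟩,
    fun p q => ?_⟩
  split_ifs with hp hq
  · exact tOpDefect_apply_eq_zero hdiag hblock A (.inl hp)
  · exact tOpDefect_apply_eq_zero hdiag hblock A (.inr hq)
  · show tOpDefect S A p q = tOpDefect S A _ _
    congr <;> ext <;> simp <;> omega
end

section
/- Let A = D + UV^* ∈ ℂ^{n×n} with D a real diagonal matrix and U, V ∈ ℂ^{n×k}, and assume the first column of A is not already in Hessenberg form, i.e., A_{i1} ≠ 0 for some i ≥ 3. Let G_2, …, G_{n−1} be Givens rotations (G_i acting on rows i and i+1) such that Q_1 = G_2 G_3 ⋯ G_{n−1} satisfies Q_1 A e_1 = α e_1 + β e_2 for some α, β ∈ ℂ. Then the matrix obtained by removing the first two rows of Q_1 U has rank at most k−1: rank((Q_1 U)[3:n, :]) ≤ k−1. -/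
/-!
Every rotation `G_i` with `i ≥ 2` fixes `e₁`, hence so does `Q₁`, and
`Q₁ A e₁ = d₁ e₁ + (Q₁ U) w` with `w = V^* e₁`. The rows `3, …, n` of `Q₁ A e₁` vanish, so
`(Q₁ U)[3:n, :] w = 0`. Moreover `w ≠ 0`, since `A[3:n, 1] = U[3:n, :] w ≠ 0`. A matrix with
`k` columns and a nonzero kernel vector has rank at most `k - 1`.
-/

open Matrix BigOperators

def IsGivensAt {n : ℕ} (i : ℕ) (c : ℝ) (s : ℂ) (G : Matrix (Fin n) (Fin n) ℂ) : Prop :=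
  i + 1 < n ∧ c ^ 2 + ‖s‖ ^ 2 = 1 ∧
  ∀ p q : Fin n,
    G p q =
      if (p : ℕ) = i ∧ (q : ℕ) = i then (c : ℂ)
      else if (p : ℕ) = i ∧ (q : ℕ) = i + 1 then s
      else if (p : ℕ) = i + 1 ∧ (q : ℕ) = i then -((starRingEnd ℂ) s)
      else if (p : ℕ) = i + 1 ∧ (q : ℕ) = i + 1 then (c : ℂ)
      else if p = q then 1 else 0

theorem Matrix.rank_le_card_sub_one_of_mulVec_eq_zero {m n K : Type*} [Fintype m] [Fintype n]
    [Field K] (M : Matrix m n K) {w : n → K} (hw : w ≠ 0) (hMw : M *ᵥ w = 0) :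
    M.rank ≤ Fintype.card n - 1 := by
  have hker : 0 < Module.finrank K (LinearMap.ker M.mulVecLin) :=
    Module.finrank_pos_iff_exists_ne_zero.mpr ⟨⟨w, hMw⟩, by simpa [Subtype.ext_iff] using hw⟩
  have := LinearMap.finrank_range_add_finrank_ker M.mulVecLin
  rw [Module.finrank_fintype_fun_eq_card] at this
  exact Nat.le_sub_one_of_lt (by rw [Matrix.rank]; omega)

theorem List.prod_mulVec_eq_self_of_forall {n R : Type*} [Fintype n] [DecidableEq n] [Semiring R]
    {v : n → R} (L : List (Matrix n n R)) (hL : ∀ M ∈ L, M *ᵥ v = v) : L.prod *ᵥ v = v := by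
  induction L with
  | nil => exact Matrix.one_mulVec v
  | cons M L ih =>
    rw [List.prod_cons, ← Matrix.mulVec_mulVec, ih fun N hN => hL N (by simp [hN]),
      hL M List.mem_cons_self]

theorem IsGivensAt.mulVec_single_one {n i : ℕ} {c : ℝ} {s : ℂ} {G : Matrix (Fin n) (Fin n) ℂ}
    (hG : IsGivensAt i c s G) {q : Fin n} (hqi : (q : ℕ) ≠ i) (hqi' : (q : ℕ) ≠ i + 1) :
    G *ᵥ Pi.single q 1 = Pi.single q 1 := by
  ext p
  rw [Matrix.mulVec_single_one, col_apply, hG.2.2, Pi.single_apply]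
  simp [hqi, hqi']

section DiagonalPlusLowRank

variable {n k R : Type*} [Fintype n] [Fintype k] [DecidableEq n] [CommSemiring R] [StarRing R]

theorem diagonal_add_mul_conjTranspose_mulVec_single (d : n → R) (U V : Matrix n k R) (j : n) :
    (diagonal d + U * Vᴴ) *ᵥ Pi.single j 1 = Pi.single j (d j) + U *ᵥ (Vᴴ *ᵥ Pi.single j 1) := by
  rw [add_mulVec, diagonal_mulVec_single, mul_one, mulVec_mulVec]

theorem mul_diagonal_add_mul_conjTranspose_mulVec_single {Q : Matrix n n R} {j : n}
    (hQ : Q *ᵥ Pi.single j 1 = Pi.single j 1) (d : n → R) (U V : Matrix n k R) :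
    (Q * (diagonal d + U * Vᴴ)) *ᵥ Pi.single j 1 =
      Pi.single j (d j) + (Q * U) *ᵥ (Vᴴ *ᵥ Pi.single j 1) := by
  rw [← mulVec_mulVec, diagonal_add_mul_conjTranspose_mulVec_single, mulVec_add, mulVec_mulVec,
    mulVec_single, op_smul_eq_smul, ← Matrix.mulVec_single_one, hQ, ← Pi.single_smul',
    smul_eq_mul, mul_one]

end DiagonalPlusLowRank

/-- Indexing is 0-based: the paper's rotations `G_2, …, G_{n-1}` are `G 1, …, G (n-2)`, its
condition `A[3:n,1] ≠ 0` reads `A i 0 ≠ 0` for some `i ≥ 2`, and removing the first two rows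
of `Q₁ U` keeps the rows of index `≥ 2`. -/
theorem stmt_16 (n k : ℕ) (hn : 3 ≤ n)
    (dd : Fin n → ℝ) (U V : Matrix (Fin n) (Fin k) ℂ)
    (A : Matrix (Fin n) (Fin n) ℂ)
    (hA : A = Matrix.diagonal (fun i => (dd i : ℂ)) + U * Vᴴ)
    (hcol : ∃ i : Fin n, 2 ≤ (i : ℕ) ∧ A i ⟨0, by omega⟩ ≠ 0)
    (c : ℕ → ℝ) (s : ℕ → ℂ) (G : ℕ → Matrix (Fin n) (Fin n) ℂ)
    (hG : ∀ i, 1 ≤ i → i ≤ n - 2 → IsGivensAt i (c i) (s i) (G i))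
    (Q₁ : Matrix (Fin n) (Fin n) ℂ)
    (hQ₁ : Q₁ = ((List.range (n - 2)).map (fun j => G (1 + j))).prod)
    (α β : ℂ)
    (hQA : ∀ p : Fin n, (Q₁ * A) p ⟨0, by omega⟩ =
      if (p : ℕ) = 0 then α else if (p : ℕ) = 1 then β else 0) :
    (Matrix.of fun (p : Fin (n - 2)) (j : Fin k) =>
      (Q₁ * U) ⟨(p : ℕ) + 2, by have := p.2; omega⟩ j).rank ≤ k - 1 := by
  set e₀ : Fin n := ⟨0, by omega⟩
  set w : Fin k → ℂ := Vᴴ *ᵥ Pi.single e₀ 1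
  have hQ₁e₀ : Q₁ *ᵥ Pi.single e₀ 1 = Pi.single e₀ 1 := by
    rw [hQ₁]
    refine List.prod_mulVec_eq_self_of_forall _ fun M hM => ?_
    obtain ⟨j, hj, rfl⟩ := List.mem_map.mp hM
    rw [List.mem_range] at hj
    exact (hG (1 + j) (by omega) (by omega)).mulVec_single_one (by simp [e₀]; omega) (by simp [e₀])
  have hQUw : ∀ p : Fin n, 2 ≤ (p : ℕ) → ((Q₁ * U) *ᵥ w) p = 0 := by
    intro p hp
    have h := congrFun (mul_diagonal_add_mul_conjTranspose_mulVec_single hQ₁e₀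
      (fun i => (dd i : ℂ)) U V) p
    rw [← hA, mulVec_single_one, col_apply, hQA p, if_neg (by omega), if_neg (by omega),
      Pi.add_apply, Pi.single_apply, if_neg (by rintro rfl; simp [e₀] at hp), zero_add] at h
    exact h.symm
  have hw : w ≠ 0 := by
    obtain ⟨i, hi, hAi⟩ := hcol
    intro hw0
    have h := congrFun (diagonal_add_mul_conjTranspose_mulVec_single (fun i => (dd i : ℂ)) U V e₀) i
    change _ = (_ + U *ᵥ w) i at h
    rw [← hA, mulVec_single_one, col_apply, hw0, mulVec_zero, add_zero, Pi.single_apply,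
      if_neg (by rintro rfl; simp [e₀] at hi)] at h
    exact hAi h
  refine (Matrix.rank_le_card_sub_one_of_mulVec_eq_zero _ hw (funext fun p => ?_)).trans_eq
    (by rw [Fintype.card_fin])
  exact hQUw ⟨p + 2, _⟩ (by simp)
end

section
/- (Hyman's method) Let H ∈ ℂ^{n×n} be upper Hessenberg, let x ∈ ℂ, and suppose v ∈ ℂ^n satisfies (xI − H)v = α e_1 for some α ∈ ℂ and v_n = 1. Then det(xI − H) = α ∏_{i=2}^{n} h_{i,i−1}, where h_{i,i−1} are the subdiagonal entries of H. -/
/-!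
Write `A = xI - H`. By Cramer's rule, `det A * v_n` is the determinant of `A` with its last
column replaced by `α e₁`, so `det A = det A * v_n = ±α · det M`, where `M` is `A` with its first
row and last column deleted. Since `A` is upper Hessenberg, `M` is upper triangular with diagonal
the subdiagonal `-h_{i,i-1}` of `A`, and the two signs `(-1)^(n-1)` cancel.
-/

open Matrix

namespace Matrix

variable {R : Type*} [CommRing R]

def IsUpperHessenberg {n : ℕ} (A : Matrix (Fin n) (Fin n) R) : Prop :=
  ∀ i j : Fin n, (j : ℕ) + 1 < i → A i j = 0

theorem det_mul_apply_of_mulVec_eq {ι : Type*} [Fintype ι] [DecidableEq ι]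
    {A : Matrix ι ι R} {v b : ι → R} (hv : A *ᵥ v = b) (j : ι) :
    A.det * v j = (A.updateCol j b).det := by
  rw [← cramer_apply, cramer_eq_adjugate_mulVec, ← hv, mulVec_mulVec, adjugate_mul,
    smul_mulVec, one_mulVec, Pi.smul_apply, smul_eq_mul]

theorem det_updateCol_last_single_zero {m : ℕ} (A : Matrix (Fin (m + 1)) (Fin (m + 1)) R)
    (α : R) :
    (A.updateCol (Fin.last m) (Pi.single 0 α)).det =
      (-1) ^ m * α * (A.submatrix Fin.succ Fin.castSucc).det := by
  rw [det_succ_column _ (Fin.last m), Finset.sum_eq_single (0 : Fin (m + 1))]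
  · have hminor : (A.updateCol (Fin.last m) (Pi.single 0 α)).submatrix Fin.succ Fin.castSucc =
        A.submatrix Fin.succ Fin.castSucc := by
      ext; simp
    simp [hminor]
  · intro i _ hi
    simp [hi]
  · simp

theorem IsUpperHessenberg.det_submatrix_succ_castSucc {m : ℕ}
    {A : Matrix (Fin (m + 1)) (Fin (m + 1)) R} (hA : A.IsUpperHessenberg) :
    (A.submatrix Fin.succ Fin.castSucc).det = ∏ i : Fin m, A i.succ i.castSucc := by
  refine det_of_isUpperTriangular fun i j hji => hA _ _ ?_
  simp only [Fin.val_succ, Fin.val_castSucc]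
  exact Nat.add_lt_add_right hji 1

theorem IsUpperHessenberg.det_eq_of_mulVec_eq_single {m : ℕ}
    {A : Matrix (Fin (m + 1)) (Fin (m + 1)) R} (hA : A.IsUpperHessenberg)
    {v : Fin (m + 1) → R} {α : R} (hv : A *ᵥ v = Pi.single 0 α) (hlast : v (Fin.last m) = 1) :
    A.det = (-1) ^ m * α * ∏ i : Fin m, A i.succ i.castSucc := by
  have hcramer := det_mul_apply_of_mulVec_eq hv (Fin.last m)
  rwa [hlast, mul_one, det_updateCol_last_single_zero, hA.det_submatrix_succ_castSucc] at hcramer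

theorem IsUpperHessenberg.smul_one_sub {n : ℕ} {H : Matrix (Fin n) (Fin n) R}
    (hH : H.IsUpperHessenberg) (x : R) :
    (x • (1 : Matrix (Fin n) (Fin n) R) - H).IsUpperHessenberg := by
  intro i j hij
  have hne : i ≠ j := fun h => by subst h; omega
  simp [one_apply_ne hne, hH i j hij]

end Matrix

/-- Hyman's method: if `H` is upper Hessenberg, `(xI - H) v = α e₁` and
`v_n = 1`, then `det (xI - H) = α ∏_{i=2}^{n} h_{i,i-1}` (0-indexed:
`∏_{i=0}^{n-2} H (i+1) i`). -/
theorem stmt_19 (n : ℕ) (hn : 1 ≤ n)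
    (H : Matrix (Fin n) (Fin n) ℂ)
    (hHess : ∀ i j : Fin n, (j : ℕ) + 1 < (i : ℕ) → H i j = 0)
    (x : ℂ) (v : Fin n → ℂ) (α : ℂ)
    (hv : (x • (1 : Matrix (Fin n) (Fin n) ℂ) - H).mulVec v =
      fun j : Fin n => if (j : ℕ) = 0 then α else 0)
    (hvn : v ⟨n - 1, by omega⟩ = 1) :
    (x • (1 : Matrix (Fin n) (Fin n) ℂ) - H).det =
      α * ∏ i : Fin (n - 1),
        H ⟨(i : ℕ) + 1, by have := i.2; omega⟩ ⟨(i : ℕ), by have := i.2; omega⟩ := by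
  obtain ⟨m, rfl⟩ : ∃ m, n = m + 1 := ⟨n - 1, by omega⟩
  have hsingle : (fun j : Fin (m + 1) => if (j : ℕ) = 0 then α else 0) = Pi.single 0 α := by
    ext j
    simp only [Pi.single_apply, Fin.ext_iff, Fin.val_zero]
  rw [hsingle] at hv
  have hsubdiag (i : Fin m) :
      (x • (1 : Matrix (Fin (m + 1)) (Fin (m + 1)) ℂ) - H) i.succ i.castSucc =
        -H i.succ i.castSucc := by
    simp [one_apply_ne (Fin.castSucc_lt_succ (i := i)).ne']
  rw [(IsUpperHessenberg.smul_one_sub hHess x).det_eq_of_mulVec_eq_single hv hvn]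
  simp only [hsubdiag, Finset.prod_neg, Finset.card_univ, Fintype.card_fin]
  rw [mul_comm _ α, mul_assoc, ← mul_assoc ((-1) ^ m), ← pow_add, Even.neg_one_pow ⟨m, rfl⟩,
    one_mul]
  rfl
end
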